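/- arXiv:2604.16233 — 2 statements merged into one kernel-verified Lean document; each statement's English description precedes it below -/
import Mathlib

section
/- Let (t_i)_{i≥1} be the reduced tangent numbers (satisfying t_1 = 1 and t_i = (1/2) Σ_{j=1}^{i-1} C(2i-2,2j-1) t_j t_{i-j} for i > 1). Define the sequence (s_i)_{i≥0} by s_0 = 1 and s_i = -Σ_{j=0}^{i-1} C(2i-1, 2j) · s_j · (-1)^{i-j} · t_{i-j} for i ≥ 1. Then s_i = 2^{i-1} for all i ≥ 1. -/
/-!
Put `A = ∑ (-1)^(k-1) t_k x^(2k-1)/(2k-1)!` and `S = ∑ s_k x^(2k)/(2k)!`. The two recursions say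
exactly that `2A' = 2 - A²`, `A(0) = 0` (so `A = √2 tanh (x/√2)`) and `S' = S A`, `S(0) = 1`.
The series `c = cosh (√2 x) = ∑ 2^k x^(2k)/(2k)!` satisfies `c'' = 2c`, hence `c'² = 2c² - 2`, and
this makes `c'/(1 + c)` a solution of the same Riccati equation as `A`. Two solutions of
`2a' = 2 - a²` differ by a solution of a linear first-order equation, so they agree when their
constant terms do: `A = c'/(1 + c)`. Then `2S` and `1 + c` solve the same linear equation
`f' = f A` with the same constant term, so `2S = 1 + c`, i.e. `2 s_k = 2^k` for `k ≥ 1`.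
-/

open PowerSeries Finset Nat

theorem Finset.sum_range_two_mul {M : Type*} [AddCommMonoid M] (f : ℕ → M) (m : ℕ) :
    ∑ k ∈ range (2 * m), f k = ∑ j ∈ range m, (f (2 * j) + f (2 * j + 1)) := by
  induction m with
  | zero => simp
  | succ m ih =>
    rw [show 2 * (m + 1) = 2 * m + 1 + 1 by ring, sum_range_succ, sum_range_succ, ih,
      sum_range_succ, add_assoc]

namespace PowerSeries

section TorsionFree

variable {R : Type*} [CommRing R] [IsAddTorsionFree R]

theorem eq_zero_of_derivative_eq_mul {f g : R⟦X⟧} (hf : d⁄dX R f = f * g)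
    (h0 : constantCoeff f = 0) : f = 0 := by
  suffices h : ∀ n, ∀ k ≤ n, coeff k f = 0 from ext fun n => by simpa using h n n le_rfl
  intro n
  induction n with
  | zero => simpa [coeff_zero_eq_constantCoeff] using h0
  | succ n ih =>
    intro k hk
    rcases Nat.lt_or_eq_of_le hk with hk | rfl
    · exact ih k (by omega)
    have hprod : coeff n (f * g) = 0 := by
      rw [coeff_mul]
      exact sum_eq_zero fun p hp => by
        rw [ih p.1 (by have := mem_antidiagonal.mp hp; omega), zero_mul]
    have hsmul : (n + 1) • coeff (n + 1) f = 0 := by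
      rw [← hprod, ← hf, coeff_derivative, nsmul_eq_mul, mul_comm]
      push_cast
      ring
    exact (smul_eq_zero.mp hsmul).resolve_left n.succ_ne_zero

theorem eq_of_derivative_eq_mul {f₁ f₂ g : R⟦X⟧} (h₁ : d⁄dX R f₁ = f₁ * g)
    (h₂ : d⁄dX R f₂ = f₂ * g) (h0 : constantCoeff f₁ = constantCoeff f₂) : f₁ = f₂ :=
  sub_eq_zero.mp <| eq_zero_of_derivative_eq_mul (by rw [map_sub, h₁, h₂, sub_mul])
    (by rw [map_sub, h0, sub_self])

theorem sq_derivative_of_cosh {c : R⟦X⟧} (hc : d⁄dX R (d⁄dX R c) = 2 * c)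
    (hc0 : constantCoeff c = 1) (hc1 : constantCoeff (d⁄dX R c) = 0) :
    d⁄dX R c ^ 2 = 2 * c ^ 2 - 2 := by
  have hconst : d⁄dX R c ^ 2 - 2 * c ^ 2 = C (-2) := by
    refine derivative.ext ?_ (by simp [hc0, hc1, map_ofNat])
    simp only [map_sub, derivative_pow, hc, Derivation.leibniz, smul_eq_mul, derivative_C]
    rw [← Nat.cast_ofNat (R := R⟦X⟧) (n := 2), Derivation.map_natCast]
    ring
  rw [map_neg, map_ofNat] at hconst
  linear_combination hconst

end TorsionFree

variable {K : Type*} [Field K]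

def egf (a : ℕ → K) : K⟦X⟧ := mk fun n => a n / n !

@[simp] theorem coeff_egf (a : ℕ → K) (n : ℕ) : coeff n (egf a) = a n / n ! := coeff_mk _ _

@[simp] theorem constantCoeff_egf (a : ℕ → K) : constantCoeff (egf a) = a 0 := by
  simp [← coeff_zero_eq_constantCoeff_apply]

variable [CharZero K]

theorem derivative_egf (a : ℕ → K) : d⁄dX K (egf a) = egf fun n => a (n + 1) := by
  ext n
  rw [coeff_derivative, coeff_egf, coeff_egf, Nat.factorial_succ]
  push_cast
  field_simp

theorem egf_mul_egf (a b : ℕ → K) :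
    egf a * egf b = egf fun n => ∑ k ∈ range (n + 1), (n.choose k : K) * a k * b (n - k) := by
  ext n
  rw [coeff_mul, Nat.sum_antidiagonal_eq_sum_range_succ_mk, coeff_egf, sum_div]
  refine sum_congr rfl fun k hk => ?_
  rw [coeff_egf, coeff_egf, Nat.cast_choose K (by simpa [Nat.lt_succ_iff] using hk)]
  have : (n ! : K) ≠ 0 := Nat.cast_ne_zero.mpr n.factorial_ne_zero
  field_simp

theorem eq_of_riccati {a b : K⟦X⟧} (ha : 2 * d⁄dX K a = 2 - a ^ 2)
    (hb : 2 * d⁄dX K b = 2 - b ^ 2) (h0 : constantCoeff a = constantCoeff b) : a = b := by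
  have h2 : C (2⁻¹ : K) * 2 = 1 := by
    rw [← map_ofNat C 2, ← map_mul, inv_mul_cancel₀ two_ne_zero, map_one]
  refine sub_eq_zero.mp <| eq_zero_of_derivative_eq_mul (g := -(C 2⁻¹ * (a + b))) ?_ ?_
  · rw [map_sub]
    linear_combination C 2⁻¹ * ha - C 2⁻¹ * hb - (d⁄dX K a - d⁄dX K b) * h2
  · rw [map_sub, h0, sub_self]

theorem riccati_of_cosh {b c : K⟦X⟧} (hc : d⁄dX K (d⁄dX K c) = 2 * c)
    (hc0 : constantCoeff c = 1) (hc1 : constantCoeff (d⁄dX K c) = 0)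
    (hb : (1 + c) * b = d⁄dX K c) : 2 * d⁄dX K b = 2 - b ^ 2 := by
  have hne : (1 + c : K⟦X⟧) ≠ 0 := fun h => by
    simpa [hc0] using congrArg constantCoeff h
  have hcb : d⁄dX K c * b = 2 * c - 2 :=
    mul_left_cancel₀ hne <| by
      linear_combination d⁄dX K c * hb + sq_derivative_of_cosh hc hc0 hc1
  have hdb : d⁄dX K c * b + (1 + c) * d⁄dX K b = 2 * c := by
    have h := congrArg (d⁄dX K) hb
    rw [Derivation.leibniz, map_add, Derivation.map_one_eq_zero, zero_add, smul_eq_mul,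
      smul_eq_mul] at h
    linear_combination h + hc
  exact mul_left_cancel₀ hne (by linear_combination 2 * hdb + b * hb - hcb)

theorem derivative_one_add_cosh_eq_mul {a c : K⟦X⟧} (ha : 2 * d⁄dX K a = 2 - a ^ 2)
    (ha0 : constantCoeff a = 0) (hc : d⁄dX K (d⁄dX K c) = 2 * c)
    (hc0 : constantCoeff c = 1) (hc1 : constantCoeff (d⁄dX K c) = 0) :
    d⁄dX K (1 + c) = (1 + c) * a := by
  set b := d⁄dX K c * (1 + c)⁻¹
  have hb : (1 + c) * b = d⁄dX K c := by
    rw [mul_comm, mul_assoc, PowerSeries.inv_mul_cancel _ (by simp [hc0]), mul_one]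
  have hb0 : constantCoeff b = 0 := by simp [b, hc1]
  rw [eq_of_riccati ha (riccati_of_cosh hc hc0 hc1 hb) (ha0.trans hb0.symm), hb, map_add,
    Derivation.map_one_eq_zero, zero_add]

end PowerSeries

variable {K : Type*} [Field K]

def tanhCoeff (t : ℕ → K) (n : ℕ) : K := if Even n then 0 else (-1) ^ (n / 2) * t (n / 2 + 1)

def evenCoeff (s : ℕ → K) (n : ℕ) : K := if Even n then s (n / 2) else 0

theorem tanhCoeff_even (t : ℕ → K) (j : ℕ) : tanhCoeff t (2 * j) = 0 := by
  simp [tanhCoeff]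

theorem tanhCoeff_odd (t : ℕ → K) (j : ℕ) :
    tanhCoeff t (2 * j + 1) = (-1) ^ j * t (j + 1) := by
  rw [tanhCoeff, if_neg (by simp), show (2 * j + 1) / 2 = j by omega]

theorem evenCoeff_even (s : ℕ → K) (j : ℕ) : evenCoeff s (2 * j) = s j := by
  simp [evenCoeff]

theorem evenCoeff_odd (s : ℕ → K) (j : ℕ) : evenCoeff s (2 * j + 1) = 0 := by
  simp [evenCoeff]

theorem evenCoeff_recursion {s t : ℕ → K}
    (hs : ∀ i : ℕ, 1 ≤ i →
      s i = -∑ j ∈ Finset.range i,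
        (Nat.choose (2 * i - 1) (2 * j) : K) * s j * (-1) ^ (i - j) * t (i - j)) (n : ℕ) :
    evenCoeff s (n + 1) =
      ∑ k ∈ range (n + 1), (n.choose k : K) * evenCoeff s k * tanhCoeff t (n - k) := by
  rcases Nat.even_or_odd' n with ⟨m, rfl | rfl⟩
  · have hterm : ∀ k ∈ range (2 * m + 1),
        ((2 * m).choose k : K) * evenCoeff s k * tanhCoeff t (2 * m - k) = 0 := by
      intro k _
      rcases Nat.even_or_odd' k with ⟨j, rfl | rfl⟩
      · rw [show 2 * m - 2 * j = 2 * (m - j) by omega, tanhCoeff_even, mul_zero]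
      · rw [evenCoeff_odd, mul_zero, zero_mul]
    rw [sum_eq_zero hterm, evenCoeff_odd]
  · have hterm : ∀ j ∈ range (m + 1),
        ((2 * m + 1).choose (2 * j) : K) * evenCoeff s (2 * j) * tanhCoeff t (2 * m + 1 - 2 * j) =
        -(((2 * (m + 1) - 1).choose (2 * j) : K) * s j * (-1) ^ (m + 1 - j) * t (m + 1 - j)) := by
      intro j hj
      have hjm : j ≤ m := Nat.lt_succ_iff.mp (mem_range.mp hj)
      rw [show 2 * m + 1 - 2 * j = 2 * (m - j) + 1 by omega, evenCoeff_even, tanhCoeff_odd,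
        show m + 1 - j = m - j + 1 by omega, show 2 * (m + 1) - 1 = 2 * m + 1 by omega]
      ring
    rw [show 2 * m + 1 + 1 = 2 * (m + 1) by ring, sum_range_two_mul, evenCoeff_even]
    simp only [evenCoeff_odd, mul_zero, zero_mul, add_zero]
    rw [sum_congr rfl hterm, sum_neg_distrib, ← hs (m + 1) (by omega)]

variable [CharZero K]

theorem sum_range_choose_mul_eq_two_mul {t : ℕ → K}
    (ht : ∀ i : ℕ, 1 < i →
      t i = (1 / 2) * ∑ j ∈ Finset.Icc 1 (i - 1),
        (Nat.choose (2 * i - 2) (2 * j - 1) : K) * t j * t (i - j)) (m : ℕ) :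
    ∑ j ∈ range (m + 1), ((2 * (m + 1)).choose (2 * j + 1) * t (j + 1) * t (m + 1 - j) : K) =
      2 * t (m + 1 + 1) := by
  rw [ht (m + 1 + 1) (by omega), ← Ico_add_one_right_eq_Icc, sum_Ico_eq_sum_range,
    show m + 1 + 1 - 1 + 1 - 1 = m + 1 by omega, show 2 * (m + 1 + 1) - 2 = 2 * (m + 1) by omega,
    ← mul_assoc, mul_one_div_cancel two_ne_zero, one_mul]
  refine sum_congr rfl fun j _ => ?_
  rw [show 2 * (1 + j) - 1 = 2 * j + 1 by omega, show m + 1 + 1 - (1 + j) = m + 1 - j by omega,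
    add_comm 1 j]

theorem tanhCoeff_recursion {t : ℕ → K} (ht1 : t 1 = 1)
    (ht : ∀ i : ℕ, 1 < i →
      t i = (1 / 2) * ∑ j ∈ Finset.Icc 1 (i - 1),
        (Nat.choose (2 * i - 2) (2 * j - 1) : K) * t j * t (i - j)) (n : ℕ) :
    2 * tanhCoeff t (n + 1) = (if n = 0 then 2 else 0) -
      ∑ k ∈ range (n + 1), (n.choose k : K) * tanhCoeff t k * tanhCoeff t (n - k) := by
  rcases Nat.even_or_odd' n with ⟨m, rfl | rfl⟩
  · rcases m with _ | m
    · simp [tanhCoeff, ht1]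
    have hterm : ∀ j ∈ range (m + 1),
        (2 * (m + 1)).choose (2 * j + 1) * tanhCoeff t (2 * j + 1) *
          tanhCoeff t (2 * (m + 1) - (2 * j + 1)) =
        (-1) ^ m * ((2 * (m + 1)).choose (2 * j + 1) * t (j + 1) * t (m + 1 - j) : K) := by
      intro j hj
      have hjm : j ≤ m := Nat.lt_succ_iff.mp (mem_range.mp hj)
      have hsign : (-1 : K) ^ j * (-1) ^ (m - j) = (-1) ^ m := by
        rw [← pow_add, Nat.add_sub_cancel' hjm]
      rw [show 2 * (m + 1) - (2 * j + 1) = 2 * (m - j) + 1 by omega, tanhCoeff_odd,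
        tanhCoeff_odd, show m - j + 1 = m + 1 - j by omega, ← hsign]
      ring
    rw [sum_range_succ, sum_range_two_mul]
    simp only [tanhCoeff_even, mul_zero, zero_mul, zero_add, add_zero]
    rw [sum_congr rfl hterm, ← mul_sum, sum_range_choose_mul_eq_two_mul ht, tanhCoeff_odd,
      if_neg (by omega), pow_succ]
    ring
  · have hterm : ∀ k ∈ range (2 * m + 1 + 1),
        ((2 * m + 1).choose k : K) * tanhCoeff t k * tanhCoeff t (2 * m + 1 - k) = 0 := by
      intro k _
      rcases Nat.even_or_odd' k with ⟨j, rfl | rfl⟩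
      · rw [tanhCoeff_even, mul_zero, zero_mul]
      · rw [show 2 * m + 1 - (2 * j + 1) = 2 * (m - j) by omega, tanhCoeff_even, mul_zero]
    rw [sum_eq_zero hterm, show 2 * m + 1 + 1 = 2 * (m + 1) by ring, tanhCoeff_even,
      if_neg (by omega)]
    ring

theorem riccati_egf_tanhCoeff {t : ℕ → K} (ht1 : t 1 = 1)
    (ht : ∀ i : ℕ, 1 < i →
      t i = (1 / 2) * ∑ j ∈ Finset.Icc 1 (i - 1),
        (Nat.choose (2 * i - 2) (2 * j - 1) : K) * t j * t (i - j)) :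
    2 * d⁄dX K (egf (tanhCoeff t)) = 2 - egf (tanhCoeff t) ^ 2 := by
  ext n
  rw [derivative_egf, sq, egf_mul_egf, ← map_ofNat C 2, coeff_C_mul, map_sub, coeff_C,
    coeff_egf, coeff_egf, mul_div_assoc', tanhCoeff_recursion ht1 ht n]
  rcases n with _ | n
  · simp
  · simp only [if_neg n.succ_ne_zero, zero_sub, neg_div]

theorem derivative_egf_evenCoeff {s t : ℕ → K}
    (hs : ∀ i : ℕ, 1 ≤ i →
      s i = -∑ j ∈ Finset.range i,
        (Nat.choose (2 * i - 1) (2 * j) : K) * s j * (-1) ^ (i - j) * t (i - j)) :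
    d⁄dX K (egf (evenCoeff s)) = egf (evenCoeff s) * egf (tanhCoeff t) := by
  rw [derivative_egf, egf_mul_egf]
  exact congrArg egf (funext (evenCoeff_recursion hs))

theorem derivative_derivative_egf_evenCoeff_two_pow :
    d⁄dX K (d⁄dX K (egf (evenCoeff (2 ^ ·)))) = 2 * egf (evenCoeff (2 ^ ·)) := by
  ext n
  rw [derivative_egf, derivative_egf, ← map_ofNat C 2, coeff_C_mul, coeff_egf, coeff_egf]
  rcases Nat.even_or_odd' n with ⟨m, rfl | rfl⟩
  · rw [show 2 * m + 1 + 1 = 2 * (m + 1) by ring, evenCoeff_even, evenCoeff_even, pow_succ]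
    ring
  · rw [show 2 * m + 1 + 1 + 1 = 2 * (m + 1) + 1 by ring, evenCoeff_odd, evenCoeff_odd]
    ring

/-- Let `(t_i)` be the reduced tangent numbers, characterized by
`t 1 = 1` and `t i = (1/2) ∑_{j=1}^{i-1} C(2i-2,2j-1) t_j t_{i-j}` for `i > 1`.
Define `(s_i)` by `s 0 = 1` and
`s i = -∑_{j=0}^{i-1} C(2i-1, 2j) · s_j · (-1)^{i-j} · t_{i-j}` for `i ≥ 1`.
Then `s i = 2^{i-1}` for all `i ≥ 1`. -/
theorem solution_of_recursion (t s : ℕ → ℚ)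
    (ht1 : t 1 = 1)
    (ht : ∀ i : ℕ, 1 < i →
      t i = (1 / 2) * ∑ j ∈ Finset.Icc 1 (i - 1),
        (Nat.choose (2 * i - 2) (2 * j - 1) : ℚ) * t j * t (i - j))
    (hs0 : s 0 = 1)
    (hs : ∀ i : ℕ, 1 ≤ i →
      s i = -∑ j ∈ Finset.range i,
        (Nat.choose (2 * i - 1) (2 * j) : ℚ) * s j * (-1) ^ (i - j) * t (i - j)) :
    ∀ i : ℕ, 1 ≤ i → s i = 2 ^ (i - 1) := by
  set A := egf (tanhCoeff t)
  set S := egf (evenCoeff s)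
  set c := egf (evenCoeff ((2 : ℚ) ^ ·))
  have hS : d⁄dX ℚ S = S * A := derivative_egf_evenCoeff hs
  have hc : d⁄dX ℚ (1 + c) = (1 + c) * A :=
    derivative_one_add_cosh_eq_mul (riccati_egf_tanhCoeff ht1 ht) (by simp [A, tanhCoeff])
      derivative_derivative_egf_evenCoeff_two_pow (by simp [c, evenCoeff])
      (by simp [c, derivative_egf, evenCoeff])
  have hSc : 2 * S = 1 + c :=
    eq_of_derivative_eq_mul (by rw [two_mul, map_add, hS]; ring) hc
      (by simp [S, c, evenCoeff, hs0, map_ofNat]; norm_num)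
  intro i hi
  obtain ⟨k, rfl⟩ := Nat.exists_eq_add_of_le' hi
  have hcoeff := congrArg (coeff (2 * (k + 1))) hSc
  rw [← map_ofNat C 2, coeff_C_mul, map_add, coeff_one, if_neg (by omega), coeff_egf,
    coeff_egf, evenCoeff_even, evenCoeff_even, zero_add, mul_div_assoc',
    div_left_inj' (Nat.cast_ne_zero.mpr (Nat.factorial_ne_zero _)), pow_succ] at hcoeff
  rw [Nat.add_sub_cancel]
  linarith
end

section
/- Let v_{i,k} be the coefficients of powers of the companion matrix (M^k = Σ_{i=1}^N v_{i,k} M^{N-i}). For every k with N ≤ k ≤ 2N, one has v_{i,k} = Σ_{a,b} w_a·w_b + (terms with at least 3 factors), where the sum runs over pairs a,b ∈ {0,…,N} with a+b = i+k-N and b ≤ k-N, using the convention w_0 := -1. -/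
/-!
Reading `M ^ k = ∑ᵢ v_{i,k} M ^ (N - i)` in the last column, where `M ^ (N - i)` has the
basis vector `e_i`, identifies `v_{i,k}` with the entry `(M ^ k)_{i,N}`. Multiplying by `M`
then gives the recursion `v_{i,k+1} = -w_i v_{1,k} + v_{i+1,k}` (with `v_{N+1,k} = 0`) and
`v_{i,N} = -w_i`. Modulo the cube of the ideal generated by the variables, `v_{1,k}` is
`-w_{k-N+1}` up to quadratic terms, so each step of the recursion adds exactly the new product
`w_i w_{k-N+1}` to the quadratic part, and the formula follows by induction on `k`.
-/

open MvPolynomial Finset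

section Companion

variable {R : Type*} [CommRing R]

/-- `extendByZero f j` is the paper's `f_{j+1}`; extending by zero states the recursion uniformly
in the index, the case `i = N` included. -/
def extendByZero {N : ℕ} (f : Fin N → R) (j : ℕ) : R := if h : j < N then f ⟨j, h⟩ else 0

theorem extendByZero_of_lt {N j : ℕ} (f : Fin N → R) (h : j < N) :
    extendByZero f j = f ⟨j, h⟩ :=
  dif_pos h

theorem extendByZero_of_le {N j : ℕ} (f : Fin N → R) (h : N ≤ j) : extendByZero f j = 0 :=
  dif_neg (by omega)

@[simp]
theorem extendByZero_val {N : ℕ} (f : Fin N → R) (i : Fin N) : extendByZero f i = f i :=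
  dif_pos i.2

theorem sum_ite_val_eq_extendByZero {N : ℕ} (f : Fin N → R) (c : ℕ) :
    ∑ r : Fin N, (if (r : ℕ) = c then f r else 0) = extendByZero f c := by
  unfold extendByZero
  split_ifs with h
  · rw [Fintype.sum_eq_single ⟨c, h⟩ fun r hr => if_neg fun hrc => hr (Fin.ext hrc)]
    exact if_pos rfl
  · exact sum_eq_zero fun r _ => if_neg (by omega)

def companionMatrix {N : ℕ} (w : Fin N → R) : Matrix (Fin N) (Fin N) R :=
  Matrix.of fun i j => if (j : ℕ) = 0 then -w i else if (j : ℕ) = i + 1 then 1 else 0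

variable {n : ℕ} (w : Fin (n + 1) → R)

theorem companionMatrix_mul_apply {α : Type*} (A : Matrix (Fin (n + 1)) α R)
    (i : Fin (n + 1)) (j : α) :
    (companionMatrix w * A) i j = -w i * A 0 j + extendByZero (A · j) (i + 1) := by
  have hterm (r : Fin (n + 1)) : companionMatrix w i r * A r j =
      (if r = 0 then -w i * A 0 j else 0) + (if (r : ℕ) = i + 1 then A r j else 0) := by
    rcases eq_or_ne r 0 with rfl | hr
    · simp [companionMatrix]
    · by_cases hri : (r : ℕ) = i + 1 <;> simp [companionMatrix, hr, hri]
  simp_rw [Matrix.mul_apply, hterm, sum_add_distrib, sum_ite_eq', mem_univ, if_true,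
    sum_ite_val_eq_extendByZero]

theorem companionMatrix_pow_apply_last {p : ℕ} (hp : p ≤ n) (r : Fin (n + 1)) :
    (companionMatrix w ^ p) r (Fin.last n) = if (r : ℕ) + p = n then 1 else 0 := by
  induction p generalizing r with
  | zero => simp [Matrix.one_apply, Fin.ext_iff]
  | succ p ih =>
    rw [pow_succ', companionMatrix_mul_apply, ih (by omega), if_neg (by rw [Fin.val_zero]; omega),
      mul_zero, zero_add]
    by_cases hr : (r : ℕ) + 1 < n + 1
    · rw [extendByZero_of_lt _ hr, ih (by omega)]
      simp only [add_assoc, add_comm 1 p]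
    · rw [extendByZero_of_le _ (by omega), if_neg (by omega)]

variable {w} {v : Fin (n + 1) → ℕ → R}
  (hv : ∀ k, companionMatrix w ^ k = ∑ i, v i k • companionMatrix w ^ (n - i))
include hv

theorem coeff_eq_companionMatrix_pow_apply_last (k : ℕ) (i : Fin (n + 1)) :
    v i k = (companionMatrix w ^ k) i (Fin.last n) := by
  rw [hv, Matrix.sum_apply, Fintype.sum_eq_single i]
  · simp [companionMatrix_pow_apply_last w (Nat.sub_le n i), i.is_le]
  · intro j hj
    rw [Matrix.smul_apply, companionMatrix_pow_apply_last w (Nat.sub_le n j),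
      if_neg (by have := j.is_le; omega), smul_zero]

theorem extendByZero_coeff_succ (k j : ℕ) :
    extendByZero (v · (k + 1)) j =
      -extendByZero w j * extendByZero (v · k) 0 + extendByZero (v · k) (j + 1) := by
  rw [extendByZero_of_lt _ n.succ_pos]
  by_cases hj : j < n + 1
  · have hcol : (v · k) = fun i => (companionMatrix w ^ k) i (Fin.last n) :=
      funext fun i => coeff_eq_companionMatrix_pow_apply_last hv k i
    rw [extendByZero_of_lt _ hj, extendByZero_of_lt _ hj, hcol,
      coeff_eq_companionMatrix_pow_apply_last hv, coeff_eq_companionMatrix_pow_apply_last hv,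
      pow_succ']
    exact companionMatrix_mul_apply w _ _ _
  · have hj' := Nat.le_succ_of_le (not_lt.1 hj)
    simp [extendByZero_of_le _ (not_lt.1 hj), extendByZero_of_le _ hj']

theorem extendByZero_coeff_base (j : ℕ) : extendByZero (v · (n + 1)) j = -extendByZero w j := by
  have hcoeff (c : ℕ) : extendByZero (v · n) c = if c = 0 then 1 else 0 := by
    by_cases hc : c < n + 1
    · rw [extendByZero_of_lt _ hc, coeff_eq_companionMatrix_pow_apply_last hv,
        companionMatrix_pow_apply_last w le_rfl]
      simp
    · rw [extendByZero_of_le _ (not_lt.1 hc), if_neg (by omega)]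
  rw [extendByZero_coeff_succ hv, hcoeff, hcoeff, if_pos rfl, if_neg j.succ_ne_zero]
  ring

end Companion

section QuadraticPart

variable {A : Type*} [CommRing A]

/-- For `a = i` and `m = k - N` this is the paper's `∑_{a+b = i+k-N, b ≤ k-N} w_a w_b`. -/
def quadraticPart (W : ℕ → A) (a m : ℕ) : A := ∑ b ∈ range (m + 1), W (a + m - b) * W b

variable {I : Ideal A} {W : ℕ → A}

theorem quadraticPart_succ (a m : ℕ) :
    quadraticPart W a (m + 1) = W a * W (m + 1) + quadraticPart W (a + 1) m := by
  rw [quadraticPart, sum_range_succ, Nat.add_sub_cancel, add_comm]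
  exact congrArg₂ _ rfl
    (sum_congr rfl fun b _ => by rw [Nat.add_right_comm a 1 m, add_assoc])

theorem quadraticPart_one_add_mem_sq (hW0 : W 0 = -1) (hWI : ∀ j, W (j + 1) ∈ I) (m : ℕ) :
    quadraticPart W 1 m + W (m + 1) ∈ I ^ 2 := by
  rw [quadraticPart, sum_range_succ', Nat.sub_zero, hW0, add_comm 1 m, mul_neg_one,
    neg_add_cancel_right]
  refine sum_mem fun b hb => ?_
  obtain ⟨c, hc⟩ : ∃ c, m + 1 - (b + 1) = c + 1 :=
    ⟨m - b - 1, by rw [mem_range] at hb; omega⟩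
  rw [hc, sq]
  exact Ideal.mul_mem_mul (hWI c) (hWI b)

theorem sub_quadraticPart_mem_pow_three (hW0 : W 0 = -1) (hWI : ∀ j, W (j + 1) ∈ I)
    (u : ℕ → ℕ → A) (K : ℕ) (hbase : ∀ j, u j K = -W (j + 1))
    (hrec : ∀ j k, u j (k + 1) = -W (j + 1) * u 0 k + u (j + 1) k) :
    ∀ k, K ≤ k → ∀ j, u j k - quadraticPart W (j + 1) (k - K) ∈ I ^ 3 := by
  suffices h : ∀ m j, u j (K + m) - quadraticPart W (j + 1) m ∈ I ^ 3 by
    intro k hk j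
    simpa [Nat.add_sub_cancel' hk] using h (k - K) j
  intro m
  induction m with
  | zero => intro j; simp [quadraticPart, hbase, hW0]
  | succ m ih =>
    intro j
    have hdecomp : u j (K + (m + 1)) - quadraticPart W (j + 1) (m + 1) =
        -W (j + 1) * (u 0 (K + m) - quadraticPart W 1 m)
          - W (j + 1) * (quadraticPart W 1 m + W (m + 1))
          + (u (j + 1) (K + m) - quadraticPart W (j + 1 + 1) m) := by
      rw [← add_assoc, hrec, quadraticPart_succ]
      ring
    rw [hdecomp]
    refine add_mem (sub_mem (Ideal.mul_mem_left _ _ (ih 0)) ?_) (ih (j + 1))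
    rw [pow_succ']
    exact Ideal.mul_mem_mul (hWI j) (quadraticPart_one_add_mem_sq hW0 hWI m)

theorem sum_filter_eq_quadraticPart {N : ℕ} (hW : ∀ c, N < c → W c = 0) (a k : ℕ)
    (hk : N ≤ k) :
    ∑ q ∈ (range (N + 1) ×ˢ range (N + 1)).filter
        (fun q => q.1 + q.2 + N = a + k ∧ q.2 + N ≤ k), W q.1 * W q.2 =
      quadraticPart W a (k - N) := by
  have hle (c : ℕ) (hc : W c ≠ 0) : c < N + 1 := Nat.lt_succ_of_le (not_lt.1 (mt (hW c) hc))
  symm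
  refine sum_bij_ne_zero (fun b _ _ => (a + (k - N) - b, b)) ?_ ?_ ?_ fun _ _ _ => rfl
  · intro b hb hne
    have h₁ := hle _ (left_ne_zero_of_mul hne)
    have h₂ := hle _ (right_ne_zero_of_mul hne)
    simp only [mem_range, mem_filter, mem_product] at hb ⊢
    omega
  · intro b _ _ b' _ _ h
    exact (Prod.ext_iff.1 h).2
  · intro q hq hne
    simp only [mem_filter, mem_product, mem_range] at hq
    have hq₁ : a + (k - N) - q.2 = q.1 := by omega
    exact ⟨q.2, by rw [mem_range]; omega, by rwa [hq₁], by rw [hq₁]⟩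

end QuadraticPart

/-- Let `v_{i,k}` be the coefficients of powers of the companion matrix
(`M^k = ∑_{i=1}^N v_{i,k} M^{N-i}`, over `ℝ[w_1,…,w_N]`).  For every `k` with
`N ≤ k ≤ 2N`, one has `v_{i,k} = ∑_{a,b} w_a·w_b + (terms with at least 3 factors)`,
where the sum runs over pairs `a,b ∈ {0,…,N}` with `a+b = i+k-N` and `b ≤ k-N`, with
the convention `w_0 := -1`.  Below `i : Fin N` represents the `1`-based index `i+1`,
and the index conditions are written without natural subtraction. -/
theorem companion_power_coefficients_quadratic_part (N : ℕ) (hN : 0 < N)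
    (M : Matrix (Fin N) (Fin N) (MvPolynomial (Fin N) ℝ))
    (hM : ∀ i j : Fin N, M i j =
      if (j : ℕ) = 0 then -X i else if (j : ℕ) = (i : ℕ) + 1 then 1 else 0)
    (v : Fin N → ℕ → MvPolynomial (Fin N) ℝ)
    (hv : ∀ k : ℕ, M ^ k = ∑ i : Fin N, v i k • M ^ (N - 1 - (i : ℕ)))
    (W : ℕ → MvPolynomial (Fin N) ℝ)
    (hW : ∀ a : ℕ, W a =
      if a = 0 then -1 else if h : a - 1 < N then X ⟨a - 1, h⟩ else 0) :
    ∀ k : ℕ, N ≤ k → k ≤ 2 * N → ∀ i : Fin N,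
      ∃ E : MvPolynomial (Fin N) ℝ,
        (∀ d ∈ E.support, 3 ≤ d.sum fun _ e => e) ∧
        v i k =
          (∑ q ∈ ((Finset.range (N + 1)) ×ˢ (Finset.range (N + 1))).filter
              (fun q => q.1 + q.2 + N = (i : ℕ) + 1 + k ∧ q.2 + N ≤ k),
            W q.1 * W q.2) + E := by
  intro k hk _ i
  obtain ⟨n, rfl⟩ : ∃ n, N = n + 1 := ⟨N - 1, by omega⟩
  obtain rfl : M = companionMatrix X := Matrix.ext hM
  simp only [Nat.add_sub_cancel] at hv
  have hWX (j : ℕ) : W (j + 1) = extendByZero X j := by simp [hW, extendByZero]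
  have hWI (j : ℕ) : W (j + 1) ∈ idealOfVars (Fin (n + 1)) ℝ := by
    rw [hWX, extendByZero]
    split_ifs
    exacts [Ideal.subset_span ⟨_, rfl⟩, zero_mem _]
  have hWzero (c : ℕ) (hc : n + 1 < c) : W c = 0 := by
    rw [hW, if_neg (by omega), dif_neg (by omega)]
  have hE := sub_quadraticPart_mem_pow_three (by simp [hW]) hWI
    (fun j k => extendByZero (v · k) j) (n + 1) (fun j => by rw [extendByZero_coeff_base hv, hWX])
    (fun j k => by rw [extendByZero_coeff_succ hv, hWX]) k hk i
  refine ⟨_, (mem_pow_idealOfVars_iff 3 _).1 hE, ?_⟩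
  rw [sum_filter_eq_quadraticPart hWzero _ _ hk, extendByZero_val]
  ring
end
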